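/- arXiv:1607.08314 — 10 statements merged into one kernel-verified Lean document; each statement's English description precedes it below -/
import Mathlib

section
/- For every odd integer n ≥ 3 and every x ∈ [0,π], the sine polynomial φ(x) = (5/4)·sin(x) + Σ_{k=2}^{n−1} sin(kx) + ((2n−3)/(4n))·sin(nx) satisfies φ(x) ≥ 0. -/
/-!
With `σ = sin (x / 2)` and `c = cos (x / 2)`, the telescoping identity
`2 sin (k x) sin (x / 2) = cos ((k - 1/2) x) - cos ((k + 1/2) x)` gives
`4 n φ(x) σ = 2 n c σ² + 2 n c (1 - cos (n x)) - 3 sin (n x) σ`.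
Since `sin² θ ≤ 2 (1 - cos θ)`, this quadratic form in `σ` is nonnegative as soon as
`8 (n c)² ≥ 9`. Otherwise `x` is close to `π`: for odd `n`, writing `x = π - y` turns it into
`2 n sin (y / 2) (cos² (y / 2) + 1 + cos (n y)) - 3 sin (n y) cos (y / 2)`, where now `n y ≤ π`
whenever `sin (n y) > 0`, and Taylor bounds of order six reduce the claim to a polynomial
inequality in `y² / 4` and `(n y)²`.
-/

open Real Finset

lemma le_of_hasDerivAt_le_hasDerivAt {f g f' g' : ℝ → ℝ}
    (hf : ∀ t, HasDerivAt f (f' t) t) (hg : ∀ t, HasDerivAt g (g' t) t)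
    (h₀ : f 0 ≤ g 0) (hd : ∀ t, 0 < t → f' t ≤ g' t) {x : ℝ} (hx : 0 ≤ x) :
    f x ≤ g x := by
  have hmono : MonotoneOn (fun t => g t - f t) (Set.Ici 0) :=
    monotoneOn_of_hasDerivWithinAt_nonneg (convex_Ici 0)
      (fun t _ => ((hg t).sub (hf t)).continuousAt.continuousWithinAt)
      (fun t _ => ((hg t).sub (hf t)).hasDerivWithinAt)
      (fun t ht => sub_nonneg.2 (hd t (by simpa using ht)))
  linarith [hmono Set.self_mem_Ici hx hx]

lemma cos_le_quartic (x : ℝ) : cos x ≤ 1 - x ^ 2 / 2 + x ^ 4 / 24 := by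
  have key : ∀ t, 0 ≤ t → cos t ≤ 1 - t ^ 2 / 2 + t ^ 4 / 24 := fun t ht =>
    le_of_hasDerivAt_le_hasDerivAt (g := fun t => 1 - t ^ 2 / 2 + t ^ 4 / 24)
      (g' := fun t => -(t - t ^ 3 / 6)) hasDerivAt_cos
      (fun t => (((hasDerivAt_const t 1).sub ((hasDerivAt_pow 2 t).div_const 2)).add
        ((hasDerivAt_pow 4 t).div_const 24)).congr_deriv (by push_cast; ring))
      (by norm_num) (fun t ht => by linarith [sin_ge_sub_cube ht.le]) ht
  simpa only [cos_abs, sq_abs, (by decide : Even 4).pow_abs] using key |x| (abs_nonneg x)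

lemma sin_le_quintic {x : ℝ} (hx : 0 ≤ x) : sin x ≤ x - x ^ 3 / 6 + x ^ 5 / 120 :=
  le_of_hasDerivAt_le_hasDerivAt (g := fun t => t - t ^ 3 / 6 + t ^ 5 / 120)
    (g' := fun t => 1 - t ^ 2 / 2 + t ^ 4 / 24) hasDerivAt_sin
    (fun t => (((hasDerivAt_id t).sub ((hasDerivAt_pow 3 t).div_const 6)).add
      ((hasDerivAt_pow 5 t).div_const 120)).congr_deriv (by push_cast; ring))
    (by norm_num) (fun t _ => cos_le_quartic t) hx

lemma sextic_le_cos (x : ℝ) : 1 - x ^ 2 / 2 + x ^ 4 / 24 - x ^ 6 / 720 ≤ cos x := by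
  have key : ∀ t, 0 ≤ t → 1 - t ^ 2 / 2 + t ^ 4 / 24 - t ^ 6 / 720 ≤ cos t := fun t ht =>
    le_of_hasDerivAt_le_hasDerivAt (f := fun t => 1 - t ^ 2 / 2 + t ^ 4 / 24 - t ^ 6 / 720)
      (f' := fun t => -(t - t ^ 3 / 6 + t ^ 5 / 120))
      (fun t => ((((hasDerivAt_const t 1).sub ((hasDerivAt_pow 2 t).div_const 2)).add
        ((hasDerivAt_pow 4 t).div_const 24)).sub
          ((hasDerivAt_pow 6 t).div_const 720)).congr_deriv (by push_cast; ring))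
      hasDerivAt_cos (by norm_num) (fun t ht => by linarith [sin_le_quintic ht.le]) ht
  have := key |x| (abs_nonneg x)
  rwa [cos_abs, sq_abs, (by decide : Even 4).pow_abs, (by decide : Even 6).pow_abs] at this

-- The inequality of `three_mul_sin_mul_cos_le` after the Taylor bounds, divided by `h * w`, with
-- `a = w²` and `b = h²`. The difference is convex in `b` with nonpositive linear coefficient, so
-- it suffices to check its constant and linear part at `b = a / 36`.
lemma taylor_poly_ineq {a b : ℝ} (hb : 0 ≤ b) (hba : 36 * b ≤ a) (ha : a ≤ 9.87) :
    3 * (1 - a / 6 + a ^ 2 / 120) * (1 - b / 2 + b ^ 2 / 24)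
      ≤ (1 - b / 6) * (3 - b - a / 2 + a ^ 2 / 24 - a ^ 3 / 720) := by
  have ha0 : 0 ≤ a := by linarith
  have hC : 0 ≤ 1 / 24 + a / 48 - a ^ 2 / 960 := by nlinarith
  have hB : -a / 6 + a ^ 2 / 180 + a ^ 3 / 4320 ≤ 0 := by nlinarith
  have hA :
      0 ≤ a ^ 2 / 60 - a ^ 3 / 720 + (-a / 6 + a ^ 2 / 180 + a ^ 3 / 4320) * (a / 36) := by
    nlinarith [mul_nonneg (mul_nonneg ha0 ha0) (mul_nonneg (sub_nonneg.2 ha) ha0)]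
  nlinarith [mul_nonneg hC (sq_nonneg b), mul_nonneg (neg_nonneg.2 hB) (sub_nonneg.2 hba)]

lemma three_mul_sin_mul_cos_le {h w : ℝ} (hh : 0 ≤ h) (hhw : 6 * h ≤ w) (hw : w ≤ π) :
    3 * h * (sin w * cos h) ≤ w * (sin h * (cos h ^ 2 + 1 + cos w)) := by
  have hw0 : 0 ≤ w := by linarith
  have hπ : π ≤ 3.1416 := pi_lt_d4.le
  have hh1 : h ≤ 0.53 := by linarith
  have hcos_sq : 1 - h ^ 2 ≤ cos h ^ 2 := by linarith [cos_sq' h, sin_sq_le_sq (x := h)]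
  have hpoly := taylor_poly_ineq (sq_nonneg h) (by nlinarith) (by nlinarith : w ^ 2 ≤ 9.87)
  calc 3 * h * (sin w * cos h)
      ≤ 3 * h * ((w - w ^ 3 / 6 + w ^ 5 / 120) * (1 - h ^ 2 / 2 + h ^ 4 / 24)) := by
        have hsin_w : 0 ≤ sin w := sin_nonneg_of_nonneg_of_le_pi hw0 hw
        have hcos_h : 0 ≤ 1 - h ^ 2 / 2 + h ^ 4 / 24 := by nlinarith
        gcongr 3 * h * ?_
        exact mul_le_mul_of_nonneg (sin_le_quintic hw0) (cos_le_quartic h) hsin_w hcos_h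
    _ = h * w * (3 * (1 - w ^ 2 / 6 + (w ^ 2) ^ 2 / 120) *
          (1 - h ^ 2 / 2 + (h ^ 2) ^ 2 / 24)) := by ring
    _ ≤ h * w * ((1 - h ^ 2 / 6) *
          (3 - h ^ 2 - w ^ 2 / 2 + (w ^ 2) ^ 2 / 24 - (w ^ 2) ^ 3 / 720)) := by gcongr
    _ = w * ((h - h ^ 3 / 6) *
          ((1 - h ^ 2) + 1 + (1 - w ^ 2 / 2 + w ^ 4 / 24 - w ^ 6 / 720))) := by ring
    _ ≤ w * (sin h * (cos h ^ 2 + 1 + cos w)) := by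
        have hsin_h : 0 ≤ h - h ^ 3 / 6 := by nlinarith
        gcongr w * ?_
        refine mul_le_mul_of_nonneg (sin_ge_sub_cube hh) ?_ hsin_h ?_
        · linarith [sextic_le_cos w]
        · linarith [neg_one_le_cos w, sq_nonneg (cos h)]

lemma three_mul_sin_mul_le {p s θ : ℝ} (hp : 0 < p) (h9 : 9 ≤ 8 * p ^ 2) :
    3 * sin θ * s ≤ 2 * p * s ^ 2 + 2 * p * (1 - cos θ) := by
  have hsin_sq : sin θ ^ 2 ≤ 2 * (1 - cos θ) := by
    nlinarith [sin_sq_add_cos_sq θ, cos_le_one θ, neg_one_le_cos θ]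
  have : 4 * p * (3 * sin θ * s) ≤ 4 * p * (2 * p * s ^ 2 + 2 * p * (1 - cos θ)) := by
    nlinarith [sq_nonneg (2 * p * sin θ - 3 * s), mul_le_mul_of_nonneg_right h9 (sq_nonneg s),
      mul_le_mul_of_nonneg_left hsin_sq (sq_nonneg p)]
  exact le_of_mul_le_mul_left this (by positivity)

lemma three_mul_sin_mul_cos_half_le {N y : ℝ} (hN : 3 ≤ N) (hy : y ∈ Set.Icc 0 π)
    (hsmall : 8 * (N * sin (y / 2)) ^ 2 < 9) :
    3 * (sin (N * y) * cos (y / 2))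
      ≤ 2 * N * (sin (y / 2) * (cos (y / 2) ^ 2 + 1 + cos (N * y))) := by
  obtain ⟨hy0, hyπ⟩ := hy
  have hπ := pi_pos
  have hsin : 0 ≤ sin (y / 2) := sin_nonneg_of_nonneg_of_le_pi (by linarith) (by linarith)
  have hcos : 0 ≤ cos (y / 2) := cos_nonneg_of_mem_Icc ⟨by linarith, by linarith⟩
  have hbracket : 0 ≤ cos (y / 2) ^ 2 + 1 + cos (N * y) := by
    nlinarith [neg_one_le_cos (N * y), sq_nonneg (cos (y / 2))]
  rcases le_or_gt (sin (N * y)) 0 with hneg | hpos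
  · nlinarith [mul_nonneg hsin hbracket, mul_nonpos_of_nonpos_of_nonneg hneg hcos]
  have hy_pos : 0 < y := by
    rcases hy0.eq_or_lt with rfl | hy_pos
    · simp at hpos
    · exact hy_pos
  have hNy_lt : N * y < 2 * π := by
    have hJordan : y / π ≤ sin (y / 2) := by
      have := mul_le_sin (x := y / 2) (by linarith) (by linarith)
      rwa [show 2 / π * (y / 2) = y / π by field_simp] at this
    have hle := mul_le_mul_of_nonneg_left hJordan (by linarith : 0 ≤ N)
    have : N * (y / π) < 2 := by
      nlinarith [mul_nonneg (by linarith : 0 ≤ N) (div_nonneg hy0 hπ.le)]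
    rwa [← mul_div_assoc, div_lt_iff₀ hπ] at this
  have hNy_le : N * y ≤ π := by
    by_contra! h
    have := sin_pos_of_pos_of_lt_pi (x := N * y - π) (by linarith) (by linarith)
    linarith [sin_sub_pi (N * y)]
  have := three_mul_sin_mul_cos_le (h := y / 2) (w := N * y) (by linarith) (by nlinarith) hNy_le
  nlinarith

lemma sum_sin_mul_sin_half (x : ℝ) (m : ℕ) :
    (∑ k ∈ Icc 1 m, sin (k * x)) * sin (x / 2) = (cos (x / 2) - cos ((m + 1 / 2) * x)) / 2 := by
  induction m with
  | zero => simp [div_eq_inv_mul]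
  | succ m ih =>
    have hstep : 2 * sin ((m + 1) * x) * sin (x / 2)
        = cos ((m + 1 / 2) * x) - cos ((m + 1 + 1 / 2) * x) := by
      rw [two_mul_sin_mul_sin]; ring_nf
    rw [sum_Icc_succ_top (by omega), add_mul, ih]
    push_cast
    linarith

lemma phi_mul_sin_half (n : ℕ) (hn : 2 ≤ n) (x : ℝ) :
    ((5 / 4) * sin x + ∑ k ∈ Icc 2 (n - 1), sin (k * x)
        + ((2 * (n : ℝ) - 3) / (4 * n)) * sin (n * x)) * sin (x / 2)
      = (2 * (n * cos (x / 2)) * sin (x / 2) ^ 2 + 2 * (n * cos (x / 2)) * (1 - cos (n * x))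
          - 3 * sin (n * x) * sin (x / 2)) / (4 * n) := by
  have hsum :
      ∑ k ∈ Icc 1 (n - 1), sin (k * x) = sin x + ∑ k ∈ Icc 2 (n - 1), sin (k * x) := by
    rw [← insert_Icc_add_one_left_eq_Icc (by omega), sum_insert (by simp)]
    norm_num
  have hcos : cos (((n - 1 : ℕ) + 1 / 2) * x)
      = cos (n * x) * cos (x / 2) + sin (n * x) * sin (x / 2) := by
    rw [← cos_sub]; congr 1; push_cast [Nat.cast_sub (by omega : 1 ≤ n)]; ring
  have hsin : sin x = 2 * sin (x / 2) * cos (x / 2) := by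
    rw [← sin_two_mul]; ring_nf
  have := sum_sin_mul_sin_half x (n - 1)
  rw [hsum, hcos] at this
  have hcoef : (2 * (n : ℝ) - 3) / (4 * n) * (4 * n) = 2 * n - 3 :=
    div_mul_cancel₀ _ (by positivity)
  rw [eq_div_iff (by positivity), hsin]
  rw [hsin] at this
  linear_combination (4 * n) * this + sin (n * x) * sin (x / 2) * hcoef

theorem phi_nonneg (n : ℕ) (hn : 3 ≤ n) (hodd : Odd n) (x : ℝ)
    (hx : x ∈ Set.Icc 0 π) :
    0 ≤ (5 / 4) * Real.sin x + ∑ k ∈ Finset.Icc 2 (n - 1), Real.sin (k * x) +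
      ((2 * (n : ℝ) - 3) / (4 * n)) * Real.sin (n * x) := by
  obtain ⟨hx0, hxπ⟩ := hx
  rcases hx0.eq_or_lt with rfl | hx_pos
  · simp
  have hπ := pi_pos
  have hσ : 0 < sin (x / 2) := sin_pos_of_pos_of_lt_pi (by linarith) (by linarith)
  have hc : 0 ≤ cos (x / 2) := cos_nonneg_of_mem_Icc ⟨by linarith, by linarith⟩
  have key : 3 * sin (n * x) * sin (x / 2)
      ≤ 2 * (n * cos (x / 2)) * sin (x / 2) ^ 2 + 2 * (n * cos (x / 2)) * (1 - cos (n * x)) := by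
    rcases le_or_gt 9 (8 * (n * cos (x / 2)) ^ 2) with hbig | hsmall
    · exact three_mul_sin_mul_le (by nlinarith [mul_nonneg (Nat.cast_nonneg n) hc]) hbig
    · -- near `π`, reflect `x = π - y`; oddness of `n` turns `cos (n * x)` into `-cos (n * y)`
      obtain ⟨y, rfl⟩ : ∃ y, x = π - y := ⟨π - x, by ring⟩
      have hhalf : (π - y) / 2 = π / 2 - y / 2 := by ring
      have hmul : (n : ℝ) * (π - y) = n * π - n * y := by ring
      simp only [hhalf, sin_pi_div_two_sub, cos_pi_div_two_sub] at hsmall ⊢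
      rw [hmul, sin_nat_mul_pi_sub, cos_nat_mul_pi_sub, hodd.neg_one_pow]
      have := three_mul_sin_mul_cos_half_le (N := n) (y := y) (by exact_mod_cast hn)
        ⟨by linarith, by linarith⟩ hsmall
      linarith
  rw [← mul_le_mul_iff_of_pos_right hσ, zero_mul, phi_mul_sin_half n (by omega) x]
  exact div_nonneg (by linarith) (by positivity)
end

section
/- Let n ≥ 3 be an odd integer and let λ ≤ (2n−3)/(4n) be a real number. Then f_{κ,λ,n}(x) ≥ 0 for all x ∈ [0,π] if and only if κ ≥ (n+1)/2 − n·λ. -/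
/-!
Write `λ₀ = (2n - 3) / (4n)`. For `λ ≤ λ₀` and `κ ≥ (n + 1) / 2 - nλ`, `f_{κ,λ,n}` is
`f_{5/4,λ₀,n}` plus nonnegative multiples of `sin x` and of `n sin x - sin nx`, so only
`f_{5/4,λ₀,n}` needs work. Telescoping gives
`8n sin θ f_{5/4,λ₀,n}(2θ) = 4n cos θ (1 + sin² θ) - (6 sin θ sin 2nθ + 4n cos θ cos 2nθ)`.
When `8n² cos² θ ≥ 9` Cauchy–Schwarz bounds the bracket. Otherwise `θ = π/2 - δ` with
`y = 2nδ ≤ 2.2`, and since `n` is odd the claim becomes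
`3δ cos δ sin y ≤ y sin δ (1 + cos² δ + cos y)`, which follows from `tan δ ≥ δ + δ³/3` and
Maclaurin bounds for `sin y` and `cos y`.

Conversely `f(π) = 0` and, `n` being odd, `f'(π) = (n + 1) / 2 - nλ - κ`, which must be `≤ 0`.
-/

open Real Finset
open scoped Nat

theorem nonneg_of_hasDerivAt_of_deriv_nonneg {f f' : ℝ → ℝ} {a b : ℝ}
    (hf : ∀ x, HasDerivAt f (f' x) x) (ha : 0 ≤ f a) (hf' : ∀ x ∈ Set.Ioo a b, 0 ≤ f' x)
    {x : ℝ} (hx : x ∈ Set.Icc a b) : 0 ≤ f x := by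
  have hmono : MonotoneOn f (Set.Icc a b) :=
    monotoneOn_of_hasDerivWithinAt_nonneg (convex_Icc a b)
      (fun y _ ↦ (hf y).continuousAt.continuousWithinAt) (fun y _ ↦ (hf y).hasDerivWithinAt)
      (by rwa [interior_Icc])
  exact ha.trans (hmono (Set.left_mem_Icc.2 (hx.1.trans hx.2)) hx hx.1)

noncomputable def sinTaylor (m : ℕ) (x : ℝ) : ℝ :=
  ∑ i ∈ range m, (-1) ^ i * x ^ (2 * i + 1) / (2 * i + 1)!

noncomputable def cosTaylor (m : ℕ) (x : ℝ) : ℝ :=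
  ∑ i ∈ range m, (-1) ^ i * x ^ (2 * i) / (2 * i)!

theorem hasDerivAt_sinTaylor (m : ℕ) (x : ℝ) : HasDerivAt (sinTaylor m) (cosTaylor m x) x := by
  unfold sinTaylor cosTaylor
  refine HasDerivAt.fun_sum fun i _ ↦ ?_
  refine (((hasDerivAt_pow (2 * i + 1) x).const_mul ((-1 : ℝ) ^ i)).div_const
    ((2 * i + 1)! : ℝ)).congr_deriv ?_
  rw [Nat.factorial_succ]
  push_cast
  field_simp

theorem hasDerivAt_cosTaylor (m : ℕ) (x : ℝ) :
    HasDerivAt (cosTaylor (m + 1)) (-sinTaylor m x) x := by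
  have h : cosTaylor (m + 1) = fun x ↦
      ∑ i ∈ range m, (-1 : ℝ) ^ (i + 1) * x ^ (2 * i + 2) / (2 * i + 2)! + 1 := by
    funext x
    simp [cosTaylor, sum_range_succ', mul_add]
  rw [h]
  unfold sinTaylor
  rw [← sum_neg_distrib]
  refine (HasDerivAt.fun_sum fun i _ ↦ ?_).add_const 1
  refine (((hasDerivAt_pow (2 * i + 2) x).const_mul ((-1 : ℝ) ^ (i + 1))).div_const
    ((2 * i + 2)! : ℝ)).congr_deriv ?_
  rw [Nat.factorial_succ (2 * i + 1)]
  push_cast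
  field_simp
  ring

theorem sin_cos_taylor_alternating (m : ℕ) {x : ℝ} (hx : 0 ≤ x) :
    0 ≤ (-1) ^ m * (cosTaylor (m + 1) x - cos x) ∧
      0 ≤ (-1) ^ m * (sinTaylor (m + 1) x - sin x) := by
  induction m generalizing x with
  | zero => simp [cosTaylor, sinTaylor, cos_le_one, sin_le hx]
  | succ m ih =>
    have hcos {t : ℝ} (ht : 0 ≤ t) : 0 ≤ (-1) ^ (m + 1) * (cosTaylor (m + 2) t - cos t) := by
      refine nonneg_of_hasDerivAt_of_deriv_nonneg
        (fun s ↦ ((hasDerivAt_cosTaylor (m + 1) s).sub (hasDerivAt_cos s)).const_mul _)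
        (by simp [cosTaylor, sum_range_succ']) (fun s hs ↦ ?_) ⟨ht, le_rfl⟩
      have := (ih hs.1.le).2
      rw [pow_succ]
      linarith
    exact ⟨hcos hx, nonneg_of_hasDerivAt_of_deriv_nonneg
      (fun s ↦ ((hasDerivAt_sinTaylor (m + 2) s).sub (hasDerivAt_sin s)).const_mul _)
      (by simp [sinTaylor]) (fun s hs ↦ hcos hs.1.le) ⟨hx, le_rfl⟩⟩

theorem add_cube_div_three_mul_cos_le_sin {x : ℝ} (h0 : 0 ≤ x) (h1 : x ≤ 1) :
    (x + x ^ 3 / 3) * cos x ≤ sin x := by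
  have hderiv (t : ℝ) : HasDerivAt (fun t ↦ sin t - (t + t ^ 3 / 3) * cos t)
      ((t + t ^ 3 / 3) * sin t - t ^ 2 * cos t) t := by
    refine ((hasDerivAt_sin t).sub (((hasDerivAt_id t).add
      ((hasDerivAt_pow 3 t).div_const 3)).mul (hasDerivAt_cos t))).congr_deriv ?_
    simp only [Pi.add_apply, id_eq, Nat.cast_ofNat, Nat.add_one_sub_one]
    ring
  have hderiv_nonneg (t : ℝ) (ht : t ∈ Set.Ioo 0 1) :
      0 ≤ (t + t ^ 3 / 3) * sin t - t ^ 2 * cos t := by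
    have hπ : t < π / 2 := by linarith [ht.2, pi_gt_three]
    have hcos : 0 < cos t := cos_pos_of_mem_Ioo ⟨by linarith [ht.1], hπ⟩
    have htan : t * cos t ≤ sin t := by
      have := le_tan ht.1.le hπ
      rwa [tan_eq_sin_div_cos, le_div_iff₀ hcos] at this
    have hsin : 0 ≤ sin t := sin_nonneg_of_nonneg_of_le_pi ht.1.le (by linarith [pi_pos])
    nlinarith [mul_le_mul_of_nonneg_left htan ht.1.le, pow_nonneg ht.1.le 3]
  linarith [nonneg_of_hasDerivAt_of_deriv_nonneg hderiv (by simp) hderiv_nonneg ⟨h0, h1⟩]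

theorem three_mul_sin_add_le {y : ℝ} (h0 : 0 ≤ y) (h : y ≤ 2.2) :
    3 * sin y + y ^ 5 / 200 ≤ y * (2 + cos y) := by
  have hcos := (sin_cos_taylor_alternating 3 h0).1
  have hsin := (sin_cos_taylor_alternating 4 h0).2
  norm_num [cosTaylor, sinTaylor, sum_range_succ, Nat.factorial] at hcos hsin
  have hy2 : y ^ 2 ≤ 4.84 := by nlinarith
  have hy4 : y ^ 4 ≤ 23.5 := by nlinarith
  have hy5 : 0 ≤ y ^ 5 := by positivity
  nlinarith [mul_le_mul_of_nonneg_left hy2 hy5, mul_le_mul_of_nonneg_left hy4 hy5,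
    mul_le_mul_of_nonneg_left hcos h0]

theorem three_mul_sin_le_of_six_mul_le {δ y : ℝ} (hδ : 0 ≤ δ) (h6 : 6 * δ ≤ y) (hy : y ≤ 2.2) :
    3 * sin y ≤ y * (1 + δ ^ 2 / 3) * (1 + cos δ ^ 2 + cos y) := by
  have hy0 : 0 ≤ y := by linarith
  have hcosδ : 1 - δ ^ 2 ≤ cos δ ^ 2 := by
    linarith [sin_sq_le_sq (x := δ), sin_sq_add_cos_sq δ]
  have hcosy : 1 - y ^ 2 / 2 ≤ cos y := one_sub_sq_div_two_le_cos
  have hδ2 : δ ^ 2 ≤ y ^ 2 / 36 := by nlinarith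
  -- the loss from `cos δ ^ 2 ≥ 1 - δ ^ 2` is at most `19 y ^ 5 / 3888 ≤ y ^ 5 / 200`
  have hloss : y * δ ^ 2 / 3 * (1 + δ ^ 2 - cos y) ≤ y ^ 5 / 200 := by
    have h1 : 1 + δ ^ 2 - cos y ≤ 19 * y ^ 2 / 36 := by linarith
    have h2 : y * δ ^ 2 / 3 ≤ y ^ 3 / 108 := by nlinarith
    have h3 : 0 ≤ 1 + δ ^ 2 - cos y := by nlinarith [cos_le_one y]
    nlinarith [mul_le_mul h2 h1 h3 (by positivity), pow_nonneg hy0 5]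
  calc 3 * sin y ≤ y * (2 + cos y) - y * δ ^ 2 / 3 * (1 + δ ^ 2 - cos y) := by
        linarith [three_mul_sin_add_le hy0 hy]
    _ = y * (1 + δ ^ 2 / 3) * (2 - δ ^ 2 + cos y) := by ring
    _ ≤ y * (1 + δ ^ 2 / 3) * (1 + cos δ ^ 2 + cos y) := by gcongr; linarith

theorem three_mul_mul_cos_mul_sin_le {δ y : ℝ} (hδ : 0 ≤ δ) (h6 : 6 * δ ≤ y) (hy : y ≤ 2.2) :
    3 * δ * cos δ * sin y ≤ y * sin δ * (1 + cos δ ^ 2 + cos y) := by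
  have hδ1 : δ ≤ 1 := by linarith
  have hcos : 0 ≤ cos δ := cos_nonneg_of_mem_Icc ⟨by linarith [pi_pos], by linarith [pi_gt_three]⟩
  have hX : 0 ≤ 1 + cos δ ^ 2 + cos y := by nlinarith [neg_one_le_cos y]
  calc 3 * δ * cos δ * sin y = δ * cos δ * (3 * sin y) := by ring
    _ ≤ δ * cos δ * (y * (1 + δ ^ 2 / 3) * (1 + cos δ ^ 2 + cos y)) :=
        mul_le_mul_of_nonneg_left (three_mul_sin_le_of_six_mul_le hδ h6 hy) (mul_nonneg hδ hcos)
    _ = y * ((δ + δ ^ 3 / 3) * cos δ) * (1 + cos δ ^ 2 + cos y) := by ring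
    _ ≤ y * sin δ * (1 + cos δ ^ 2 + cos y) := by
        gcongr
        · linarith
        · exact add_cube_div_three_mul_cos_le_sin hδ hδ1

theorem two_mul_nat_mul_le_of_sin_sq_lt {n : ℕ} (hn : 3 ≤ n) {δ : ℝ} (h0 : 0 ≤ δ)
    (hδ : δ ≤ π / 2) (h : 8 * n ^ 2 * sin δ ^ 2 < 9) : 2 * n * δ ≤ 2.2 := by
  have hn3 : (3 : ℝ) ≤ n := by exact_mod_cast hn
  have hsin : 0 ≤ sin δ := sin_nonneg_of_nonneg_of_le_pi h0 (by linarith [pi_pos])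
  have hδ37 : δ ≤ 0.37 := by
    by_contra! hlt
    have hmono : sin 0.37 < sin δ := strictMonoOn_sin
      ⟨by linarith [pi_pos], by linarith [pi_gt_three]⟩ ⟨by linarith [pi_pos], hδ⟩ hlt
    have h37 : (0.3615 : ℝ) ≤ sin 0.37 := by nlinarith [sin_ge_sub_cube (x := 0.37) (by norm_num)]
    have hs2 : (0.3615 : ℝ) ^ 2 ≤ sin δ ^ 2 := pow_le_pow_left₀ (by norm_num) (by linarith) 2
    have hn9 : (9 : ℝ) ≤ n ^ 2 := by nlinarith
    nlinarith [mul_le_mul hn9 hs2 (by norm_num) (by positivity)]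
  have hδ2 : δ ^ 2 ≤ 0.37 ^ 2 := pow_le_pow_left₀ h0 hδ37 2
  have hlin : 0.977 * δ ≤ sin δ := by
    nlinarith [sin_ge_sub_cube h0, mul_le_mul_of_nonneg_left hδ2 h0]
  nlinarith [mul_le_mul_of_nonneg_left hlin (by positivity : (0 : ℝ) ≤ 2 * n)]

theorem six_mul_sin_mul_sin_add_le_of_nine_le {N θ ψ : ℝ} (hN : 0 ≤ N) (hcos : 0 ≤ cos θ)
    (h : 9 ≤ 8 * N ^ 2 * cos θ ^ 2) :
    6 * sin θ * sin ψ + 4 * N * cos θ * cos ψ ≤ 4 * N * cos θ * (1 + sin θ ^ 2) := by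
  have hψ := sin_sq_add_cos_sq ψ
  have hθ := sin_sq_add_cos_sq θ
  have hcs : (6 * sin θ * sin ψ + 4 * N * cos θ * cos ψ) ^ 2 ≤
      (6 * sin θ) ^ 2 + (4 * N * cos θ) ^ 2 := by
    nlinarith [sq_nonneg (6 * sin θ * cos ψ - 4 * N * cos θ * sin ψ)]
  have hR : (6 * sin θ) ^ 2 + (4 * N * cos θ) ^ 2 ≤ (4 * N * cos θ * (1 + sin θ ^ 2)) ^ 2 := by
    nlinarith [mul_nonneg (sq_nonneg (sin θ)) (by linarith : (0 : ℝ) ≤ 32 * N ^ 2 * cos θ ^ 2 - 36),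
      sq_nonneg (N * cos θ * sin θ ^ 2)]
  exact abs_le_of_sq_le_sq' (hcs.trans hR) (by positivity) |>.2

theorem three_mul_cos_mul_sin_le {n : ℕ} (hn : 3 ≤ n) {δ : ℝ} (h0 : 0 ≤ δ) (hδ : δ ≤ π / 2)
    (h : 8 * n ^ 2 * sin δ ^ 2 < 9) :
    3 * cos δ * sin (2 * n * δ) ≤ 2 * n * sin δ * (1 + cos δ ^ 2 + cos (2 * n * δ)) := by
  rcases h0.eq_or_lt with rfl | hpos
  · simp
  have hn3 : (3 : ℝ) ≤ n := by exact_mod_cast hn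
  have := three_mul_mul_cos_mul_sin_le h0 (by nlinarith)
    (two_mul_nat_mul_le_of_sin_sq_lt hn h0 hδ h)
  nlinarith

theorem six_mul_sin_mul_sin_add_le {n : ℕ} (hn : 3 ≤ n) (hodd : Odd n) {θ : ℝ} (h0 : 0 ≤ θ)
    (hθ : θ ≤ π / 2) :
    6 * sin θ * sin (2 * n * θ) + 4 * n * cos θ * cos (2 * n * θ) ≤
      4 * n * cos θ * (1 + sin θ ^ 2) := by
  have hcos : 0 ≤ cos θ := cos_nonneg_of_mem_Icc ⟨by linarith [pi_pos], hθ⟩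
  by_cases hfar : 9 ≤ 8 * (n : ℝ) ^ 2 * cos θ ^ 2
  · exact six_mul_sin_mul_sin_add_le_of_nine_le (Nat.cast_nonneg n) hcos hfar
  obtain ⟨δ, rfl⟩ : ∃ δ, θ = π / 2 - δ := ⟨π / 2 - θ, by ring⟩
  rw [cos_pi_div_two_sub] at hfar
  have hangle : 2 * (n : ℝ) * (π / 2 - δ) = n * π - 2 * n * δ := by ring
  rw [hangle, sin_pi_div_two_sub, cos_pi_div_two_sub, sin_nat_mul_pi_sub, cos_nat_mul_pi_sub,
    hodd.neg_one_pow]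
  have := three_mul_cos_mul_sin_le hn (by linarith) (by linarith) (not_le.1 hfar)
  linarith

/-- The function `f_{κ,λ,n}`. -/
noncomputable def trigSum (κ lam : ℝ) (n : ℕ) (x : ℝ) : ℝ :=
  κ * sin x + ∑ k ∈ Icc 2 (n - 1), sin (k * x) + lam * sin (n * x)

theorem two_mul_sin_mul_sum_sin (θ : ℝ) {N : ℕ} (hN : 1 ≤ N) :
    2 * sin θ * ∑ k ∈ Icc 2 N, sin (k * (2 * θ)) = cos (3 * θ) - cos ((2 * N + 1) * θ) := by
  induction N, hN using Nat.le_induction with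
  | base => norm_num
  | succ N hN ih =>
    have hstep : 2 * sin θ * sin (((N + 1 : ℕ) : ℝ) * (2 * θ)) =
        cos ((2 * N + 1) * θ) - cos ((2 * ((N + 1 : ℕ) : ℝ) + 1) * θ) := by
      rw [two_mul_sin_mul_sin, ← cos_neg (θ - _)]
      push_cast
      ring_nf
    rw [sum_Icc_succ_top (by omega), mul_add, ih, hstep]
    ring

theorem eight_mul_sin_mul_trigSum (n : ℕ) (hn : 3 ≤ n) (θ : ℝ) :
    8 * n * sin θ * trigSum (5 / 4) ((2 * n - 3) / (4 * n)) n (2 * θ) =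
      4 * n * cos θ * (1 + sin θ ^ 2) - (6 * sin θ * sin (2 * n * θ) +
        4 * n * cos θ * cos (2 * n * θ)) := by
  have hlam : 8 * (n : ℝ) * ((2 * n - 3) / (4 * n)) = 2 * (2 * n - 3) := by
    field_simp
    ring
  have hsum := two_mul_sin_mul_sum_sin θ (N := n - 1) (by omega)
  rw [Nat.cast_sub (by omega : 1 ≤ n), Nat.cast_one,
    show (2 * ((n : ℝ) - 1) + 1) * θ = 2 * n * θ - θ by ring, cos_sub] at hsum
  have h2θ : 2 * sin θ * sin (2 * θ) = cos θ - cos (3 * θ) := by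
    rw [two_mul_sin_mul_sin, ← cos_neg (θ - _)]
    ring_nf
  unfold trigSum
  rw [show (n : ℝ) * (2 * θ) = 2 * n * θ by ring]
  linear_combination 5 * (n : ℝ) * h2θ + 4 * (n : ℝ) * hsum +
    sin θ * sin (2 * n * θ) * hlam - (n : ℝ) * cos_three_mul θ -
    4 * (n : ℝ) * cos θ * sin_sq_add_cos_sq θ

theorem trigSum_extremal_nonneg {n : ℕ} (hn : 3 ≤ n) (hodd : Odd n) {x : ℝ}
    (hx : x ∈ Set.Icc 0 π) : 0 ≤ trigSum (5 / 4) ((2 * n - 3) / (4 * n)) n x := by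
  rcases hx.1.eq_or_lt with rfl | hpos
  · simp [trigSum]
  have hsin : 0 < 8 * n * sin (x / 2) := by
    have : (0 : ℝ) < n := by positivity
    have := sin_pos_of_pos_of_lt_pi (x := x / 2) (by linarith) (by linarith [hx.2, pi_pos])
    positivity
  have key := eight_mul_sin_mul_trigSum n hn (x / 2)
  rw [mul_div_cancel₀ x two_ne_zero] at key
  refine (mul_nonneg_iff_of_pos_left hsin).1 ?_
  rw [key, sub_nonneg]
  exact six_mul_sin_mul_sin_add_le hn hodd (by linarith) (by linarith [hx.2])

theorem abs_sin_nat_mul_le (n : ℕ) (x : ℝ) : |sin (n * x)| ≤ n * |sin x| := by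
  induction n with
  | zero => simp
  | succ n ih =>
    push_cast
    rw [add_mul, one_mul, sin_add]
    calc |sin (n * x) * cos x + cos (n * x) * sin x|
        ≤ |sin (n * x)| * |cos x| + |cos (n * x)| * |sin x| := by
          rw [← abs_mul, ← abs_mul]; exact abs_add_le _ _
      _ ≤ n * |sin x| * 1 + 1 * |sin x| := by
          gcongr
          exacts [abs_cos_le_one x, abs_cos_le_one _]
      _ = (n + 1) * |sin x| := by ring

theorem trigSum_nonneg {n : ℕ} (hn : 3 ≤ n) (hodd : Odd n) {lam κ : ℝ}
    (hlam : lam ≤ (2 * n - 3) / (4 * n)) (hκ : (n + 1) / 2 - n * lam ≤ κ) {x : ℝ}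
    (hx : x ∈ Set.Icc 0 π) : 0 ≤ trigSum κ lam n x := by
  have hsin : 0 ≤ sin x := sin_nonneg_of_nonneg_of_le_pi hx.1 hx.2
  have hsin_n : sin (n * x) ≤ n * sin x := by
    simpa [abs_of_nonneg hsin] using (le_abs_self _).trans (abs_sin_nat_mul_le n x)
  have hnlam : (n : ℝ) * ((2 * n - 3) / (4 * n)) = (2 * n - 3) / 4 := by
    field_simp
  have hdecomp : trigSum κ lam n x = trigSum (5 / 4) ((2 * n - 3) / (4 * n)) n x +
      (κ - ((n + 1) / 2 - n * lam)) * sin x +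
      ((2 * n - 3) / (4 * n) - lam) * (n * sin x - sin (n * x)) := by
    unfold trigSum
    linear_combination -sin x * hnlam
  rw [hdecomp]
  have := trigSum_extremal_nonneg hn hodd hx
  have := mul_nonneg (sub_nonneg.2 hκ) hsin
  have := mul_nonneg (sub_nonneg.2 hlam) (sub_nonneg.2 hsin_n)
  linarith

theorem hasDerivAt_trigSum (κ lam : ℝ) (n : ℕ) (x : ℝ) :
    HasDerivAt (trigSum κ lam n)
      (κ * cos x + ∑ k ∈ Icc 2 (n - 1), k * cos (k * x) + lam * (n * cos (n * x))) x := by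
  have hsin (c : ℝ) : HasDerivAt (fun x ↦ sin (c * x)) (c * cos (c * x)) x := by
    simpa [mul_comm] using ((hasDerivAt_id x).const_mul c).sin
  exact (((hasDerivAt_sin x).const_mul κ).fun_add
    (HasDerivAt.fun_sum (u := Icc 2 (n - 1)) fun k _ ↦ hsin k)).fun_add ((hsin n).const_mul lam)

theorem trigSum_pi (κ lam : ℝ) (n : ℕ) : trigSum κ lam n π = 0 := by
  simp [trigSum, sin_nat_mul_pi]

theorem sum_Icc_neg_one_pow_mul {m : ℕ} (hm : 1 ≤ m) :
    ∑ k ∈ Icc 2 (2 * m), (-1 : ℝ) ^ k * k = m + 1 := by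
  induction m, hm using Nat.le_induction with
  | base => norm_num
  | succ m hm ih =>
    rw [show 2 * (m + 1) = 2 * m + 1 + 1 by ring, sum_Icc_succ_top (by omega),
      sum_Icc_succ_top (by omega), ih]
    simp only [pow_succ, (even_two_mul m).neg_one_pow]
    push_cast
    ring

theorem hasDerivAt_trigSum_pi {n : ℕ} (hn : 3 ≤ n) (hodd : Odd n) (κ lam : ℝ) :
    HasDerivAt (trigSum κ lam n) ((n + 1) / 2 - n * lam - κ) π := by
  have hsum : ∑ k ∈ Icc 2 (n - 1), k * cos (k * π) = (n + 1) / 2 := by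
    obtain ⟨m, rfl⟩ := hodd
    simp only [cos_nat_mul_pi, mul_comm _ ((-1 : ℝ) ^ _), Nat.add_sub_cancel,
      sum_Icc_neg_one_pow_mul (by omega : 1 ≤ m)]
    push_cast
    ring
  convert hasDerivAt_trigSum κ lam n π using 1
  rw [hsum, cos_pi, cos_nat_mul_pi, hodd.neg_one_pow]
  ring

theorem nonpos_of_hasDerivAt_of_nonneg_left {F : ℝ → ℝ} {a b d : ℝ} (hab : a < b)
    (hF : HasDerivAt F d b) (hb : F b = 0) (hnonneg : ∀ x ∈ Set.Ioo a b, 0 ≤ F x) : d ≤ 0 := by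
  have hslope : Filter.Tendsto (slope F b) (nhdsWithin b (Set.Iio b)) (nhds d) :=
    (hasDerivAt_iff_tendsto_slope.1 hF).mono_left (nhdsWithin_mono b fun _ hx ↦ ne_of_lt hx)
  refine le_of_tendsto hslope ?_
  filter_upwards [Ioo_mem_nhdsLT hab] with x hx
  rw [slope_def_field, hb, sub_zero]
  exact div_nonpos_of_nonneg_of_nonpos (hnonneg x hx) (by linarith [hx.2])

theorem kappa_zero_odd_small_lambda (n : ℕ) (hn : 3 ≤ n) (hodd : Odd n)
    (lam : ℝ) (hlam : lam ≤ (2 * (n : ℝ) - 3) / (4 * n)) (κ : ℝ) :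
    (∀ x ∈ Set.Icc (0 : ℝ) π,
      0 ≤ κ * Real.sin x + ∑ k ∈ Finset.Icc 2 (n - 1), Real.sin (k * x) +
        lam * Real.sin (n * x)) ↔ ((n : ℝ) + 1) / 2 - n * lam ≤ κ := by
  change (∀ x ∈ Set.Icc 0 π, 0 ≤ trigSum κ lam n x) ↔ _
  refine ⟨fun h ↦ ?_, fun hκ x hx ↦ trigSum_nonneg hn hodd hlam hκ hx⟩
  have := nonpos_of_hasDerivAt_of_nonneg_left pi_pos (hasDerivAt_trigSum_pi hn hodd κ lam)
    (trigSum_pi κ lam n) fun x hx ↦ h x (Set.Ioo_subset_Icc_self hx)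
  linarith
end

section
/- Let n ≥ 3 be an odd integer and let λ be a real number with (2n−3)/(4n) < λ ≤ 1/2. Then the polynomial f_{κ,λ,n} with κ = (n+1)/2 − n·λ is NOT nonnegative on [0,π]; that is, there exists x ∈ [0,π] with f_{κ,λ,n}(x) < 0. -/
open Real Finset Filter Topology

/-!
Write `x = π - t`. Since `sin (k (π - t)) = (-1)^(k+1) sin (k t)` and `n` is odd,
`f (π - t) = ∑ cₖ sin (k t)` with `cₖ = (-1)^(k+1) aₖ`, where `aₖ` is the coefficient of `sin (k x)`
in `f`. For `κ = (n + 1)/2 - nλ` the first moment `∑ cₖ k` vanishes, and the third moment equals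
`p (p + 1) (4nλ - (2n - 3))` for `n = 2p + 1`, which is positive exactly when `λ > (2n - 3)/(4n)`.
Hence `f (π - t) ≈ -(∑ cₖ k³) t³ / 6 < 0` for small `t > 0`.
-/

theorem mul_sin_le_of_abs_le_one (c : ℝ) {u : ℝ} (hu : |u| ≤ 1) :
    c * sin u ≤ c * (u - u ^ 3 / 6) + |c| * (|u| ^ 5 / 100) := by
  have h : |c * sin u - c * (u - u ^ 3 / 6)| ≤ |c| * (|u| ^ 5 / 100) := by
    rw [← mul_sub, abs_mul]
    exact mul_le_mul_of_nonneg_left (sin_bound hu) (abs_nonneg c)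
  linarith [le_abs_self (c * sin u - c * (u - u ^ 3 / 6))]

theorem eventually_sum_mul_sin_neg {ι : Type*} (s : Finset ι) (c ω : ι → ℝ)
    (h₁ : ∑ i ∈ s, c i * ω i = 0) (h₃ : 0 < ∑ i ∈ s, c i * ω i ^ 3) :
    ∀ᶠ t in 𝓝[>] 0, ∑ i ∈ s, c i * sin (ω i * t) < 0 := by
  set A := ∑ i ∈ s, c i * ω i ^ 3
  set B := ∑ i ∈ s, |c i| * |ω i| ^ 5 / 100
  have h_small : ∀ᶠ t in 𝓝[>] (0 : ℝ), ∀ i ∈ s, |ω i * t| ≤ 1 := by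
    refine (eventually_all_finset s).2 fun i _ ↦ nhdsWithin_le_nhds ?_
    have : Tendsto (fun t ↦ |ω i * t|) (𝓝 0) (𝓝 0) :=
      (by fun_prop : Continuous fun t ↦ |ω i * t|).tendsto' 0 0 (by simp)
    exact this.eventually (eventually_le_nhds one_pos)
  have h_rem : ∀ᶠ t in 𝓝[>] (0 : ℝ), t ^ 2 * B < A / 6 := by
    refine nhdsWithin_le_nhds ?_
    have : Tendsto (fun t : ℝ ↦ t ^ 2 * B) (𝓝 0) (𝓝 0) :=
      (by fun_prop : Continuous fun t : ℝ ↦ t ^ 2 * B).tendsto' 0 0 (by simp)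
    exact this.eventually (eventually_lt_nhds (by positivity))
  filter_upwards [h_small, h_rem, self_mem_nhdsWithin] with t h_small h_rem (ht : 0 < t)
  calc ∑ i ∈ s, c i * sin (ω i * t)
      ≤ ∑ i ∈ s, (c i * (ω i * t - (ω i * t) ^ 3 / 6) + |c i| * (|ω i * t| ^ 5 / 100)) :=
        sum_le_sum fun i hi ↦ mul_sin_le_of_abs_le_one (c i) (h_small i hi)
    _ = ∑ i ∈ s,
          (t * (c i * ω i) - t ^ 3 / 6 * (c i * ω i ^ 3) + t ^ 5 * (|c i| * |ω i| ^ 5 / 100)) :=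
        sum_congr rfl fun i _ ↦ by rw [abs_mul, abs_of_pos ht]; ring
    _ = t * ∑ i ∈ s, c i * ω i - t ^ 3 / 6 * A + t ^ 5 * B := by
        rw [sum_add_distrib, sum_sub_distrib, ← mul_sum, ← mul_sum, ← mul_sum]
    _ = t ^ 3 * (t ^ 2 * B - A / 6) := by rw [h₁]; ring
    _ < 0 := mul_neg_of_pos_of_neg (by positivity) (by linarith)

theorem sum_Icc_one_eq_add_sum_add {M : Type*} [AddCommMonoid M] {n : ℕ} (hn : 2 ≤ n)
    (F : ℕ → M) : ∑ k ∈ Icc 1 n, F k = F 1 + ∑ k ∈ Icc 2 (n - 1), F k + F n := by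
  obtain ⟨m, rfl⟩ : ∃ m, n = m + 1 := ⟨n - 1, by omega⟩
  rw [sum_Icc_succ_top (by omega), ← add_sum_Ioc_eq_sum_Icc (by omega),
    ← Icc_add_one_left_eq_Ioc, Nat.add_sub_cancel]
  rfl

theorem sum_Icc_neg_one_pow_mul_odd (p : ℕ) :
    ∑ k ∈ Icc 1 (2 * p + 1), (-1 : ℝ) ^ (k + 1) * k = p + 1 := by
  induction p with
  | zero => simp
  | succ p ih =>
    rw [show 2 * (p + 1) + 1 = 2 * p + 1 + 1 + 1 by ring, sum_Icc_succ_top (by omega),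
      sum_Icc_succ_top (by omega), ih]
    simp [pow_succ, pow_mul]
    ring

theorem sum_Icc_neg_one_pow_mul_cube_odd (p : ℕ) :
    ∑ k ∈ Icc 1 (2 * p + 1), (-1 : ℝ) ^ (k + 1) * (k : ℝ) ^ 3 = (p + 1) ^ 2 * (4 * p + 1) := by
  induction p with
  | zero => simp
  | succ p ih =>
    rw [show 2 * (p + 1) + 1 = 2 * p + 1 + 1 + 1 by ring, sum_Icc_succ_top (by omega),
      sum_Icc_succ_top (by omega), ih]
    simp [pow_succ, pow_mul]
    ring

noncomputable def sinePoly (κ lam : ℝ) (n : ℕ) (x : ℝ) : ℝ :=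
  κ * sin x + ∑ k ∈ Icc 2 (n - 1), sin (k * x) + lam * sin (n * x)

def sinePolyCoeff (κ lam : ℝ) (n k : ℕ) : ℝ :=
  if k = 1 then κ else if k = n then lam else 1

theorem sum_sinePolyCoeff_mul (κ lam : ℝ) {n : ℕ} (hn : 2 ≤ n) (F : ℕ → ℝ) :
    ∑ k ∈ Icc 1 n, sinePolyCoeff κ lam n k * F k =
      ∑ k ∈ Icc 1 n, F k + (κ - 1) * F 1 + (lam - 1) * F n := by
  have h_mid : ∀ k ∈ Icc 2 (n - 1), sinePolyCoeff κ lam n k * F k = F k := fun k hk ↦ by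
    rw [mem_Icc] at hk
    rw [sinePolyCoeff, if_neg (by omega), if_neg (by omega), one_mul]
  rw [sum_Icc_one_eq_add_sum_add hn, sum_Icc_one_eq_add_sum_add hn, sum_congr rfl h_mid]
  simp only [sinePolyCoeff, if_neg (show n ≠ 1 by omega), ↓reduceIte]
  ring

theorem sinePoly_eq_sum (κ lam : ℝ) {n : ℕ} (hn : 2 ≤ n) (x : ℝ) :
    sinePoly κ lam n x = ∑ k ∈ Icc 1 n, sinePolyCoeff κ lam n k * sin (k * x) := by
  rw [sum_sinePolyCoeff_mul κ lam hn, sum_Icc_one_eq_add_sum_add hn, sinePoly, Nat.cast_one,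
    one_mul]
  ring

theorem sinePoly_pi_sub (κ lam : ℝ) {n : ℕ} (hn : 2 ≤ n) (t : ℝ) :
    sinePoly κ lam n (π - t) =
      ∑ k ∈ Icc 1 n, (sinePolyCoeff κ lam n k * (-1) ^ (k + 1)) * sin (k * t) := by
  rw [sinePoly_eq_sum κ lam hn]
  refine sum_congr rfl fun k _ ↦ ?_
  rw [mul_sub, sin_nat_mul_pi_sub, pow_succ]
  ring

theorem sum_sinePolyCoeff_mul_neg_one_pow_odd (κ lam : ℝ) {p : ℕ} (hp : 1 ≤ p) (F : ℕ → ℝ) :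
    ∑ k ∈ Icc 1 (2 * p + 1), sinePolyCoeff κ lam (2 * p + 1) k * (-1) ^ (k + 1) * F k =
      ∑ k ∈ Icc 1 (2 * p + 1), (-1) ^ (k + 1) * F k + (κ - 1) * F 1 +
        (lam - 1) * F (2 * p + 1) := by
  simp only [mul_assoc]
  rw [sum_sinePolyCoeff_mul κ lam (by omega)]
  simp [pow_succ, pow_mul]

theorem not_nonneg_odd_mid_lambda_general (n : ℕ) (hn : 3 ≤ n) (hodd : Odd n)
    (lam : ℝ) (hlam1 : (2 * (n : ℝ) - 3) / (4 * n) < lam) :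
    ∃ x ∈ Set.Icc (0 : ℝ) π,
      (((n : ℝ) + 1) / 2 - n * lam) * Real.sin x +
        ∑ k ∈ Finset.Icc 2 (n - 1), Real.sin (k * x) +
        lam * Real.sin (n * x) < 0 := by
  obtain ⟨p, rfl⟩ := hodd
  have hp : 1 ≤ p := by omega
  set κ := ((↑(2 * p + 1) : ℝ) + 1) / 2 - ↑(2 * p + 1) * lam
  set c := fun k ↦ sinePolyCoeff κ lam (2 * p + 1) k * (-1) ^ (k + 1)
  have h₁ : ∑ k ∈ Icc 1 (2 * p + 1), c k * (k : ℝ) = 0 := by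
    rw [sum_sinePolyCoeff_mul_neg_one_pow_odd κ lam hp, sum_Icc_neg_one_pow_mul_odd]
    simp only [κ]
    push_cast
    ring
  have h₃ : 0 < ∑ k ∈ Icc 1 (2 * p + 1), c k * (k : ℝ) ^ 3 := by
    have h_lam : 0 < 4 * (2 * p + 1) * lam - (4 * p - 1) := by
      rw [div_lt_iff₀ (by positivity)] at hlam1
      push_cast at hlam1
      linarith
    rw [sum_sinePolyCoeff_mul_neg_one_pow_odd κ lam hp, sum_Icc_neg_one_pow_mul_cube_odd]
    calc (0 : ℝ) < p * (p + 1) * (4 * (2 * p + 1) * lam - (4 * p - 1)) := by positivity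
      _ = _ := by simp only [κ]; push_cast; ring
  obtain ⟨t, ⟨h_neg, ht_pos⟩, ht_lt⟩ :=
    ((eventually_sum_mul_sin_neg _ c _ h₁ h₃).and self_mem_nhdsWithin).and
      (nhdsWithin_le_nhds (eventually_lt_nhds pi_pos)) |>.exists
  refine ⟨π - t, ⟨by linarith, by linarith⟩, ?_⟩
  rw [← sinePoly, sinePoly_pi_sub κ lam (by omega)]
  exact h_neg

theorem not_nonneg_odd_mid_lambda (n : ℕ) (hn : 3 ≤ n) (hodd : Odd n)
    (lam : ℝ) (hlam1 : (2 * (n : ℝ) - 3) / (4 * n) < lam) (hlam2 : lam ≤ 1 / 2) :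
    ∃ x ∈ Set.Icc (0 : ℝ) π,
      (((n : ℝ) + 1) / 2 - n * lam) * Real.sin x +
        ∑ k ∈ Finset.Icc 2 (n - 1), Real.sin (k * x) +
        lam * Real.sin (n * x) < 0 :=
  not_nonneg_odd_mid_lambda_general n hn hodd lam hlam1
end

section
/- Let n ≥ 3 be an odd integer and let λ > 1/2 be a real number. Then the polynomial f_{1,λ,n}(x) = sin(x) + Σ_{k=2}^{n−1} sin(kx) + λ·sin(nx) is NOT nonnegative on [0,π]; that is, there exists x ∈ [0,π] with f_{1,λ,n}(x) < 0. -/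
/-!
Put `θ = π - π / n`. Since `n` is odd, `nθ = (n - 1)π` is a multiple of `2π`, so `w = e^{iθ}`
is an `n`-th root of unity different from `1`. Hence `∑_{k<n} sin kθ = Im ∑_{k<n} w^k = 0`, so
`f_{1,λ,n}(θ) = λ sin nθ = 0`, while `∑_{k<n} k cos kθ = Re (n / (w - 1)) = -n/2` gives
`f'_{1,λ,n}(θ) = n (λ - 1/2) > 0`. So `f_{1,λ,n}` is negative just to the left of `θ`.
-/

open Real Finset Filter

theorem sum_range_natCast_mul_pow_mul_sub_one {R : Type*} [CommRing R] (x : R) (n : ℕ) :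
    (∑ k ∈ range n, (k : R) * x ^ k) * (x - 1) =
      ((n : R) - 1) * x ^ n - ∑ k ∈ range n, x ^ k + 1 := by
  induction n with
  | zero => simp
  | succ m ih =>
    rw [sum_range_succ, sum_range_succ (fun k => x ^ k), add_mul, ih]
    push_cast
    ring

theorem sum_range_natCast_mul_pow_of_pow_eq_one {K : Type*} [Field K] {x : K} {n : ℕ}
    (hxn : x ^ n = 1) (hx : x ≠ 1) : ∑ k ∈ range n, (k : K) * x ^ k = n / (x - 1) := by
  have hsub : x - 1 ≠ 0 := sub_ne_zero.mpr hx
  have hgeom : ∑ k ∈ range n, x ^ k = 0 := by rw [geom_sum_eq hx, hxn, sub_self, zero_div]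
  have h := sum_range_natCast_mul_pow_mul_sub_one x n
  rw [hxn, hgeom] at h
  rw [eq_div_iff hsub, h]
  ring

theorem Complex.exp_ofReal_mul_I_pow (θ : ℝ) (k : ℕ) :
    Complex.exp (θ * Complex.I) ^ k = Complex.exp ((k * θ : ℝ) * Complex.I) := by
  rw [← Complex.exp_nat_mul]
  push_cast
  ring_nf

theorem Complex.re_inv_exp_mul_I_sub_one {θ : ℝ} (hθ : Real.cos θ ≠ 1) :
    (Complex.exp (θ * Complex.I) - 1)⁻¹.re = -1 / 2 := by
  have hc : 1 - Real.cos θ ≠ 0 := sub_ne_zero.mpr hθ.symm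
  rw [Complex.inv_re, Complex.normSq_apply]
  simp only [Complex.sub_re, Complex.sub_im, Complex.exp_ofReal_mul_I_re,
    Complex.exp_ofReal_mul_I_im, Complex.one_re, Complex.one_im, sub_zero]
  have hnorm : (Real.cos θ - 1) * (Real.cos θ - 1) + Real.sin θ * Real.sin θ =
      2 * (1 - Real.cos θ) := by
    linear_combination Real.sin_sq_add_cos_sq θ
  rw [hnorm]
  field_simp
  ring

section RootOfUnity

variable {θ : ℝ} {n : ℕ}

theorem exp_mul_I_pow_eq_one_of_cos_nat_mul_eq_one (hnθ : cos (n * θ) = 1) :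
    Complex.exp (θ * Complex.I) ^ n = 1 := by
  have hsin : sin (n * θ) = 0 := sin_eq_zero_iff_cos_eq.mpr (Or.inl hnθ)
  rw [Complex.exp_ofReal_mul_I_pow]
  apply Complex.ext
  · rw [Complex.exp_ofReal_mul_I_re, hnθ, Complex.one_re]
  · rw [Complex.exp_ofReal_mul_I_im, hsin, Complex.one_im]

theorem exp_mul_I_ne_one_of_cos_ne_one (hθ : cos θ ≠ 1) :
    Complex.exp (θ * Complex.I) ≠ 1 := by
  intro h
  apply hθ
  simpa using congrArg Complex.re h

theorem sum_range_sin_nat_mul_eq_zero (hnθ : cos (n * θ) = 1) (hθ : cos θ ≠ 1) :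
    ∑ k ∈ range n, sin (k * θ) = 0 := by
  have h := congrArg Complex.im <| geom_sum_eq (exp_mul_I_ne_one_of_cos_ne_one hθ) n
  rw [exp_mul_I_pow_eq_one_of_cos_nat_mul_eq_one hnθ, sub_self, zero_div, Complex.im_sum] at h
  simpa only [Complex.exp_ofReal_mul_I_pow, Complex.exp_ofReal_mul_I_im, Complex.zero_im] using h

theorem sum_range_nat_mul_cos_nat_mul (hnθ : cos (n * θ) = 1) (hθ : cos θ ≠ 1) :
    ∑ k ∈ range n, k * cos (k * θ) = -(n / 2) := by
  have h := congrArg Complex.re <| sum_range_natCast_mul_pow_of_pow_eq_one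
    (exp_mul_I_pow_eq_one_of_cos_nat_mul_eq_one hnθ) (exp_mul_I_ne_one_of_cos_ne_one hθ)
  rw [div_eq_mul_inv, ← Complex.ofReal_natCast, Complex.re_ofReal_mul,
    Complex.re_inv_exp_mul_I_sub_one hθ, Complex.re_sum] at h
  simp only [Complex.exp_ofReal_mul_I_pow, Complex.mul_re, Complex.natCast_re, Complex.natCast_im,
    Complex.exp_ofReal_mul_I_re, zero_mul, sub_zero] at h
  linarith

end RootOfUnity

/-- The polynomial `f_{κ,λ,n}`. -/
noncomputable def sinPoly (κ lam : ℝ) (n : ℕ) (x : ℝ) : ℝ :=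
  κ * sin x + ∑ k ∈ Icc 2 (n - 1), sin (k * x) + lam * sin (n * x)

theorem sum_Icc_two_sub_one_add {M : Type*} [AddCommMonoid M] (g : ℕ → M) {n : ℕ}
    (hn : 2 ≤ n) :
    g 0 + g 1 + ∑ k ∈ Icc 2 (n - 1), g k = ∑ k ∈ range n, g k := by
  rw [← Ico_add_one_right_eq_Icc, Nat.sub_add_cancel (by omega), range_eq_Ico,
    ← sum_Ico_consecutive g (Nat.zero_le 2) hn, ← range_eq_Ico, sum_range_succ, sum_range_one]

theorem sinPoly_one_eq_sum_range (lam : ℝ) {n : ℕ} (hn : 2 ≤ n) (x : ℝ) :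
    sinPoly 1 lam n x = ∑ k ∈ range n, sin (k * x) + lam * sin (n * x) := by
  rw [sinPoly, ← sum_Icc_two_sub_one_add _ hn]
  simp

theorem hasDerivAt_sinPoly_one (lam : ℝ) {n : ℕ} (hn : 2 ≤ n) (x : ℝ) :
    HasDerivAt (sinPoly 1 lam n)
      (∑ k ∈ range n, k * cos (k * x) + lam * (n * cos (n * x))) x := by
  have hsin (k : ℕ) : HasDerivAt (fun x : ℝ => sin (k * x)) (k * cos (k * x)) x := by
    simpa [mul_comm] using ((hasDerivAt_id x).const_mul (k : ℝ)).sin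
  rw [funext (sinPoly_one_eq_sum_range lam hn)]
  exact (HasDerivAt.fun_sum fun k _ => hsin k).add ((hsin n).const_mul lam)

theorem exists_mem_Ioo_neg_of_hasDerivAt_pos {f : ℝ → ℝ} {a b c : ℝ} (hba : b < a)
    (hf : HasDerivAt f c a) (hc : 0 < c) (ha : f a = 0) : ∃ x ∈ Set.Ioo b a, f x < 0 := by
  have hsign := eventually_nhdsWithin_sign_eq_of_deriv_pos (hf.deriv ▸ hc) ha
  obtain ⟨x, hfx, hx⟩ :=
    (Eventually.and (nhdsWithin_le_nhds hsign) (Ioo_mem_nhdsLT hba)).exists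
  refine ⟨x, hx, ?_⟩
  rwa [sign_neg (sub_neg.mpr hx.2), sign_eq_neg_one_iff] at hfx

theorem not_nonneg_odd_large_lambda (n : ℕ) (hn : 3 ≤ n) (hodd : Odd n)
    (lam : ℝ) (hlam : 1 / 2 < lam) :
    ∃ x ∈ Set.Icc (0 : ℝ) π,
      1 * Real.sin x + ∑ k ∈ Finset.Icc 2 (n - 1), Real.sin (k * x) +
        lam * Real.sin (n * x) < 0 := by
  obtain ⟨m, hm⟩ := hodd
  have hn3 : (3 : ℝ) ≤ n := by exact_mod_cast hn
  have hπn : 0 < π / n ∧ π / n < π := ⟨by positivity, div_lt_self pi_pos (by linarith)⟩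
  set θ := π - π / n
  have hθ : 0 < θ ∧ θ < π := ⟨by linarith, by linarith⟩
  have hcosθ : cos θ ≠ 1 := fun h =>
    hθ.1.ne' ((cos_eq_one_iff_of_lt_of_lt (by linarith [pi_pos]) (by linarith [pi_pos])).mp h)
  have hcosnθ : cos (n * θ) = 1 := by
    have : n * θ = m * (2 * π) := by
      simp only [θ]; field_simp; rw [hm]; push_cast; ring
    rw [this, cos_nat_mul_two_pi]
  have hsinnθ : sin (n * θ) = 0 := sin_eq_zero_iff_cos_eq.mpr (Or.inl hcosnθ)
  have hzero : sinPoly 1 lam n θ = 0 := by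
    rw [sinPoly_one_eq_sum_range lam (by omega), sum_range_sin_nat_mul_eq_zero hcosnθ hcosθ,
      hsinnθ, zero_add, mul_zero]
  have hderiv := hasDerivAt_sinPoly_one lam (by omega : 2 ≤ n) θ
  rw [sum_range_nat_mul_cos_nat_mul hcosnθ hcosθ, hcosnθ] at hderiv
  obtain ⟨x, hx, hneg⟩ := exists_mem_Ioo_neg_of_hasDerivAt_pos hθ.1 hderiv (by nlinarith) hzero
  exact ⟨x, ⟨hx.1.le, (hx.2.trans hθ.2).le⟩, hneg⟩
end

section
/- Let n ≥ 4 be an even integer and let λ < 1/2 be a real number. Then the polynomial f_{1,λ,n}(x) = sin(x) + Σ_{k=2}^{n−1} sin(kx) + λ·sin(nx) is NOT nonnegative on [0,π]; that is, there exists x ∈ [0,π] with f_{1,λ,n}(x) < 0. -/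
open Real Finset Filter Topology

/-!
At `θ = 2π/n` the function `f x = ∑_{k<n} sin (k x) + λ sin (n x)` vanishes, because the
imaginary parts of the `n`-th roots of unity sum to zero. Its derivative there is
`∑_{k<n} k cos (kθ) + λ n = n (λ - 1/2) < 0`, so `f` is negative just to the right of `θ`,
and `θ < π` as soon as `n ≥ 3`.
-/

lemma sum_range_exp_two_pi_div_mul_I {n : ℕ} (hn : 1 < n) :
    ∑ k ∈ range n, Complex.exp (↑(k * (2 * π / n)) * Complex.I) = 0 := by
  have hζ := Complex.isPrimitiveRoot_exp n (by omega)
  convert hζ.geom_sum_eq_zero hn using 2 with k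
  rw [← Complex.exp_nat_mul]
  push_cast
  ring_nf

lemma sum_range_cos_two_pi_div_mul {n : ℕ} (hn : 1 < n) :
    ∑ k ∈ range n, cos (k * (2 * π / n)) = 0 := by
  simpa only [Complex.re_sum, Complex.exp_ofReal_mul_I_re, Complex.zero_re] using
    congrArg Complex.re (sum_range_exp_two_pi_div_mul_I hn)

lemma sum_range_sin_two_pi_div_mul {n : ℕ} (hn : 1 < n) :
    ∑ k ∈ range n, sin (k * (2 * π / n)) = 0 := by
  simpa only [Complex.im_sum, Complex.exp_ofReal_mul_I_im, Complex.zero_im] using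
    congrArg Complex.im (sum_range_exp_two_pi_div_mul_I hn)

lemma nat_mul_two_pi_div {n : ℕ} (hn : n ≠ 0) : (n : ℝ) * (2 * π / n) = 2 * π := by
  field_simp

lemma cos_sub_mul_two_pi_div {n k : ℕ} (hn : n ≠ 0) (hk : k ≤ n) :
    cos ((n - k : ℕ) * (2 * π / n)) = cos (k * (2 * π / n)) := by
  rw [Nat.cast_sub hk, sub_mul, nat_mul_two_pi_div hn, cos_two_pi_sub]

/-- Pairing `k` with `n - k` shows that `∑_{k ≤ n} k cos (2πk/n)` is half of
`n ∑_{k ≤ n} cos (2πk/n) = n`. -/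
lemma sum_range_nat_mul_cos_two_pi_div_mul {n : ℕ} (hn : 1 < n) :
    ∑ k ∈ range n, k * cos (k * (2 * π / n)) = -n / 2 := by
  have hn0 : n ≠ 0 := by omega
  have hcos_n : cos (n * (2 * π / n)) = 1 := by rw [nat_mul_two_pi_div hn0, cos_two_pi]
  have hsum : ∑ k ∈ range (n + 1), cos (k * (2 * π / n)) = 1 := by
    rw [sum_range_succ, sum_range_cos_two_pi_div_mul hn, hcos_n, zero_add]
  have hreflect : ∑ k ∈ range (n + 1), (k : ℝ) * cos (k * (2 * π / n)) =
      ∑ k ∈ range (n + 1), (n - k : ℝ) * cos (k * (2 * π / n)) := by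
    rw [← sum_range_reflect]
    refine sum_congr rfl fun k hk => ?_
    have hk : k ≤ n := Nat.lt_succ_iff.mp (mem_range.mp hk)
    rw [Nat.add_sub_cancel, cos_sub_mul_two_pi_div hn0 hk, Nat.cast_sub hk]
  simp only [sub_mul, sum_sub_distrib, ← mul_sum, hsum] at hreflect
  rw [sum_range_succ, hcos_n] at hreflect
  linarith

lemma hasDerivAt_sin_nat_mul (k : ℕ) (x : ℝ) :
    HasDerivAt (fun x => sin (k * x)) (k * cos (k * x)) x := by
  simpa [mul_comm] using ((hasDerivAt_id x).const_mul (k : ℝ)).sin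

lemma hasDerivAt_sum_sin_nat_mul (s : Finset ℕ) (x : ℝ) :
    HasDerivAt (fun x => ∑ k ∈ s, sin (k * x)) (∑ k ∈ s, k * cos (k * x)) x :=
  HasDerivAt.fun_sum fun k _ => hasDerivAt_sin_nat_mul k x

lemma HasDerivAt.eventually_neg_right {f : ℝ → ℝ} {f' a : ℝ} (hf : HasDerivAt f f' a)
    (ha : f a = 0) (hf' : f' < 0) : ∀ᶠ x in 𝓝[>] a, f x < 0 := by
  have hslope := (hasDerivAt_iff_tendsto_slope.mp hf).mono_left (nhdsGT_le_nhdsNE a)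
  filter_upwards [hslope.eventually_lt_const hf', self_mem_nhdsWithin] with x hx (hax : a < x)
  rw [slope_def_field, ha, sub_zero, div_neg_iff] at hx
  rcases hx with ⟨-, h⟩ | ⟨h, -⟩
  · linarith
  · exact h

lemma one_mul_sin_add_sum_Icc_two (n : ℕ) (hn : 2 ≤ n) (x : ℝ) :
    1 * sin x + ∑ k ∈ Icc 2 (n - 1), sin (k * x) = ∑ k ∈ range n, sin (k * x) := by
  have hrange : range n = insert 0 (insert 1 (Icc 2 (n - 1))) := by
    ext k; simp only [mem_range, mem_insert, mem_Icc]; omega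
  rw [hrange, sum_insert (by simp), sum_insert (by simp)]
  simp

theorem not_nonneg_even_small_lambda_general (n : ℕ) (hn : 4 ≤ n)
    (lam : ℝ) (hlam : lam < 1 / 2) :
    ∃ x ∈ Set.Icc (0 : ℝ) π,
      1 * Real.sin x + ∑ k ∈ Finset.Icc 2 (n - 1), Real.sin (k * x) +
        lam * Real.sin (n * x) < 0 := by
  have hn0 : n ≠ 0 := by omega
  have hθ_pos : 0 < 2 * π / n := by positivity
  have hθ_lt_pi : 2 * π / n < π := by
    rw [div_lt_iff₀ (by positivity)]
    linarith [mul_le_mul_of_nonneg_left (by exact_mod_cast hn : (4 : ℝ) ≤ n) pi_pos.le, pi_pos]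
  set f : ℝ → ℝ := fun x => ∑ k ∈ range n, sin (k * x) + lam * sin (n * x)
  have hf_zero : f (2 * π / n) = 0 := by
    simp [f, sum_range_sin_two_pi_div_mul (by omega : 1 < n), nat_mul_two_pi_div hn0]
  have hf_deriv : HasDerivAt f (n * (lam - 1 / 2)) (2 * π / n) := by
    refine ((hasDerivAt_sum_sin_nat_mul (range n) _).add
      ((hasDerivAt_sin_nat_mul n _).const_mul lam)).congr_deriv ?_
    rw [sum_range_nat_mul_cos_two_pi_div_mul (by omega), nat_mul_two_pi_div hn0, cos_two_pi]
    ring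
  obtain ⟨x, hfx, hx⟩ := ((hf_deriv.eventually_neg_right hf_zero
    (mul_neg_of_pos_of_neg (by positivity) (by linarith))).and (Ioo_mem_nhdsGT hθ_lt_pi)).exists
  refine ⟨x, ⟨hθ_pos.le.trans hx.1.le, hx.2.le⟩, ?_⟩
  rwa [one_mul_sin_add_sum_Icc_two n (by omega)]

theorem not_nonneg_even_small_lambda (n : ℕ) (hn : 4 ≤ n) (heven : Even n)
    (lam : ℝ) (hlam : lam < 1 / 2) :
    ∃ x ∈ Set.Icc (0 : ℝ) π,
      1 * Real.sin x + ∑ k ∈ Finset.Icc 2 (n - 1), Real.sin (k * x) +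
        lam * Real.sin (n * x) < 0 :=
  not_nonneg_even_small_lambda_general n hn lam hlam
end

section
/- For every even integer n ≥ 4 and every x ∈ [0,π], the sine polynomial (n + 1/2)·sin(x) + Σ_{k=2}^{n} sin(kx) is nonnegative. -/
/-!
Multiply by `2 sin (x / 2) > 0`. The sum telescopes to `cos (x / 2) - cos ((2n + 1) x / 2)`, and
with `c = cos (x / 2)` the product becomes `2 (2n - 1) (1 - c²) c + c - cos ((2n + 1) x / 2)`.
For `c ≥ 1/2` it suffices to bound the last cosine by `1`; for `c ≤ 1/2`, i.e. `x` near `π`, use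
`|cos ((2n + 1) θ)| ≤ (2n + 1) |cos θ|`, which is `|sin (m t)| ≤ m |sin t|` at `t = π / 2 - θ`.
-/

open Real Finset

theorem two_mul_sin_half_mul_sum_sin (n : ℕ) (x : ℝ) :
    2 * sin (x / 2) * ∑ k ∈ Icc 1 n, sin (k * x) = cos (x / 2) - cos ((2 * n + 1) * (x / 2)) := by
  have hsum : ∑ k ∈ Icc 1 n, sin (k * x) = ∑ i ∈ range n, sin (x * i + x) := by
    rw [← Finset.Ico_add_one_right_eq_Icc, sum_Ico_eq_sum_range, Nat.add_sub_cancel]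
    refine sum_congr rfl fun k _ => ?_
    push_cast
    ring_nf
  rw [mul_assoc, hsum, sin_mul_sum_sin, ← mul_assoc, two_mul_sin_mul_sin, ← cos_neg]
  ring_nf

theorem two_mul_sin_half_mul_add_sum_sin {n : ℕ} (hn : 1 ≤ n) (x : ℝ) :
    2 * sin (x / 2) * ((n + 1 / 2) * sin x + ∑ k ∈ Icc 2 n, sin (k * x)) =
      2 * (2 * n - 1) * (1 - cos (x / 2) ^ 2) * cos (x / 2) + cos (x / 2)
        - cos ((2 * n + 1) * (x / 2)) := by
  have hsum := two_mul_sin_half_mul_sum_sin n x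
  rw [Icc_eq_cons_Ioc hn, sum_cons, ← Icc_add_one_left_eq_Ioc, Nat.cast_one, one_mul,
    one_add_one_eq_two] at hsum
  have hsin : sin x = 2 * sin (x / 2) * cos (x / 2) := by
    rw [← sin_two_mul, mul_div_cancel₀ _ two_ne_zero]
  linear_combination hsum + (2 * n - 1) * sin (x / 2) * hsin
    + 2 * (2 * n - 1) * cos (x / 2) * sin_sq_add_cos_sq (x / 2)

theorem abs_sin_nat_mul_le_s11 (m : ℕ) (t : ℝ) : |sin (m * t)| ≤ m * |sin t| := by
  induction m with
  | zero => simp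
  | succ m ih =>
    calc |sin ((m + 1 : ℕ) * t)| = |sin (m * t) * cos t + cos (m * t) * sin t| := by
          push_cast
          rw [add_mul, one_mul, sin_add]
      _ ≤ |sin (m * t)| + |sin t| := by
          refine (abs_add_le _ _).trans (add_le_add ?_ ?_) <;> rw [abs_mul]
          · exact mul_le_of_le_one_right (abs_nonneg _) (abs_cos_le_one t)
          · exact mul_le_of_le_one_left (abs_nonneg _) (abs_cos_le_one _)
      _ ≤ (m + 1 : ℕ) * |sin t| := by
          push_cast
          linarith

theorem abs_cos_odd_mul_le (n : ℕ) (θ : ℝ) :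
    |cos ((2 * n + 1) * θ)| ≤ (2 * n + 1) * |cos θ| :=
  calc |cos ((2 * n + 1) * θ)| = |sin ((2 * n + 1 : ℕ) * (π / 2 - θ))| := by
        rw [show ((2 * n + 1 : ℕ) : ℝ) * (π / 2 - θ) = π / 2 - (2 * n + 1) * θ + n * π by
            push_cast; ring,
          sin_add_nat_mul_pi, sin_pi_div_two_sub, abs_mul, abs_pow, abs_neg, abs_one, one_pow,
          one_mul]
    _ ≤ (2 * n + 1 : ℕ) * |sin (π / 2 - θ)| := abs_sin_nat_mul_le_s11 _ _
    _ = (2 * n + 1) * |cos θ| := by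
        rw [sin_pi_div_two_sub]
        push_cast
        rfl

theorem cubic_add_sub_nonneg {n c C : ℝ} (hn : 3 / 2 ≤ n) (hc₀ : 0 ≤ c) (hc₁ : c ≤ 1)
    (hC₁ : C ≤ 1) (hC : C ≤ (2 * n + 1) * c) :
    0 ≤ 2 * (2 * n - 1) * (1 - c ^ 2) * c + c - C := by
  rcases le_total (1 / 2) c with hc | hc
  · have hc' : 3 / 4 ≤ (1 + c) * c := by nlinarith
    have h : 1 ≤ 2 * (2 * n - 1) * (1 + c) * c := by
      nlinarith [mul_nonneg (sub_nonneg.2 hn) (sub_nonneg.2 hc')]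
    nlinarith [mul_le_mul_of_nonneg_left h (sub_nonneg.2 hc₁)]
  · nlinarith [mul_nonneg hc₀ (sub_nonneg.2 hc)]

theorem even_polynomial_nonneg_general (n : ℕ) (hn : 4 ≤ n) (x : ℝ)
    (hx : x ∈ Set.Icc 0 π) :
    0 ≤ ((n : ℝ) + 1 / 2) * Real.sin x + ∑ k ∈ Finset.Icc 2 n, Real.sin (k * x) := by
  obtain ⟨hx₀, hxπ⟩ := hx
  rcases hx₀.eq_or_lt with rfl | hx₀
  · simp
  have hsin : 0 < sin (x / 2) := sin_pos_of_pos_of_lt_pi (by linarith) (by linarith [pi_pos])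
  have hcos : 0 ≤ cos (x / 2) := cos_nonneg_of_mem_Icc ⟨by linarith [pi_pos], by linarith⟩
  have hC := le_of_abs_le (abs_cos_odd_mul_le n (x / 2))
  rw [abs_of_nonneg hcos] at hC
  have hn' : (4 : ℝ) ≤ n := by exact_mod_cast hn
  refine nonneg_of_mul_nonneg_right ?_ (mul_pos two_pos hsin)
  rw [two_mul_sin_half_mul_add_sum_sin (by omega)]
  exact cubic_add_sub_nonneg (by linarith) hcos (cos_le_one _) (cos_le_one _) hC

theorem even_polynomial_nonneg (n : ℕ) (hn : 4 ≤ n) (heven : Even n) (x : ℝ)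
    (hx : x ∈ Set.Icc 0 π) :
    0 ≤ ((n : ℝ) + 1 / 2) * Real.sin x + ∑ k ∈ Finset.Icc 2 n, Real.sin (k * x) :=
  even_polynomial_nonneg_general n hn x hx
end

section
/- Let a, b, c be real numbers. The sine polynomial a·sin(x) + b·sin(2x) + c·sin(3x) is nonnegative for all x ∈ [0,π] if and only if either (i) |b| ≥ 4c and a − 2|b| + 3c ≥ 0, or (ii) |b| < 4c and a ≥ c + b²/(4c). -/
/-!
Since `sin 2x = 2 sin x cos x` and `sin 3x = sin x (4 cos² x - 1)`, the sine polynomial equals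
`sin x · q (cos x)` with `q t = 4c t² + 2b t + (a - c)`. As `sin x > 0` on `(0, π)` and `cos` maps
`(0, π)` onto `(-1, 1)`, nonnegativity on `[0, π]` means `q ≥ 0` on `[-1, 1]`. The two cases of the
criterion say whether the vertex `-b / (4c)` of `q` lies outside `[-1, 1]` (then the minimum is at an
endpoint, `q (±1) = a ± 2b + 3c`) or inside it (then the minimum is `a - c - b² / (4c)`).
-/

open Real Set

theorem sin_add_sin_two_mul_add_sin_three_mul (a b c x : ℝ) :
    a * sin x + b * sin (2 * x) + c * sin (3 * x) =
      sin x * (4 * c * cos x ^ 2 + 2 * b * cos x + (a - c)) := by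
  rw [sin_two_mul, sin_three_mul]
  linear_combination (-4 * c * sin x) * sin_sq_add_cos_sq x

theorem forall_mem_Icc_zero_pi_sin_mul_comp_cos_nonneg_iff {f : ℝ → ℝ} (hf : Continuous f) :
    (∀ x ∈ Icc 0 π, 0 ≤ sin x * f (cos x)) ↔ ∀ t ∈ Icc (-1) 1, 0 ≤ f t := by
  refine ⟨fun h => ?_, fun h x hx => ?_⟩
  · suffices Icc (-1) 1 ⊆ {t | 0 ≤ f t} from fun t ht => this ht
    rw [← closure_Ioo (by norm_num : (-1 : ℝ) ≠ 1)]
    refine closure_minimal (fun t ⟨ht₁, ht₂⟩ => ?_) (isClosed_le continuous_const hf)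
    have hpos : 0 < arccos t := arccos_pos.mpr ht₂
    have hlt : arccos t < π := arccos_lt_pi.mpr ht₁
    have hx := h (arccos t) ⟨hpos.le, hlt.le⟩
    rw [cos_arccos ht₁.le ht₂.le] at hx
    exact nonneg_of_mul_nonneg_right hx (sin_pos_of_pos_of_lt_pi hpos hlt)
  · exact mul_nonneg (sin_nonneg_of_nonneg_of_le_pi hx.1 hx.2)
      (h _ ⟨neg_one_le_cos x, cos_le_one x⟩)

theorem quadratic_nonneg_on_Icc_neg_one_one_of_two_mul_le_abs (A B C : ℝ) (hB : 2 * A ≤ |B|)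
    (hmin : 0 ≤ A - |B| + C) {t : ℝ} (ht : t ∈ Icc (-1) 1) : 0 ≤ A * t ^ 2 + B * t + C := by
  obtain ⟨ht₁, ht₂⟩ := ht
  -- `q t - q (-1) = (1 + t) (A (t - 1) + B)` and `q t - q 1 = (1 - t) (-A (t + 1) - B)`.
  rcases abs_cases B with ⟨hB', hB₀⟩ | ⟨hB', hB₀⟩ <;> rw [hB'] at hB hmin
  · have hfactor : 0 ≤ A * (t - 1) + B := by rcases le_or_gt 0 A with hA | hA <;> nlinarith
    nlinarith [mul_nonneg (by linarith : (0 : ℝ) ≤ 1 + t) hfactor]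
  · have hfactor : 0 ≤ -A * (t + 1) - B := by rcases le_or_gt 0 A with hA | hA <;> nlinarith
    nlinarith [mul_nonneg (by linarith : (0 : ℝ) ≤ 1 - t) hfactor]

theorem quadratic_nonneg_on_Icc_neg_one_one_iff (A B C : ℝ) :
    (∀ t ∈ Icc (-1 : ℝ) 1, 0 ≤ A * t ^ 2 + B * t + C) ↔
      (2 * A ≤ |B| ∧ 0 ≤ A - |B| + C) ∨ (|B| < 2 * A ∧ B ^ 2 ≤ 4 * A * C) := by
  constructor
  · intro h
    by_cases hB : |B| < 2 * A
    · have hA : 0 < A := by linarith [abs_nonneg B]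
      have hvertex : -B / (2 * A) ∈ Icc (-1 : ℝ) 1 := by
        obtain ⟨hB₁, hB₂⟩ := abs_lt.mp hB
        constructor
        · rw [le_div_iff₀ (by positivity)]; linarith
        · rw [div_le_one (by positivity)]; linarith
      have hval : 4 * A * (A * (-B / (2 * A)) ^ 2 + B * (-B / (2 * A)) + C) = 4 * A * C - B ^ 2 := by
        field_simp
        ring
      have hq := mul_nonneg (by positivity : (0 : ℝ) ≤ 4 * A) (h _ hvertex)
      exact Or.inr ⟨hB, by linarith⟩
    · refine Or.inl ⟨not_lt.mp hB, ?_⟩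
      have hq₁ := h 1 (by norm_num)
      have hq₂ := h (-1) (by norm_num)
      rcases abs_cases B with ⟨hB', _⟩ | ⟨hB', _⟩ <;> rw [hB'] <;> nlinarith
  · rintro (⟨hB, hmin⟩ | ⟨hB, hdisc⟩) t ht
    · exact quadratic_nonneg_on_Icc_neg_one_one_of_two_mul_le_abs A B C hB hmin ht
    · have hA : 0 < A := by linarith [abs_nonneg B]
      nlinarith [sq_nonneg (2 * A * t + B)]

theorem degree_three_sine_nonneg_iff (a b c : ℝ) :
    (∀ x ∈ Set.Icc (0 : ℝ) π,
      0 ≤ a * Real.sin x + b * Real.sin (2 * x) + c * Real.sin (3 * x)) ↔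
    ((4 * c ≤ |b| ∧ 0 ≤ a - 2 * |b| + 3 * c) ∨
     (|b| < 4 * c ∧ c + b ^ 2 / (4 * c) ≤ a)) := by
  have hc (hb : |b| < 4 * c) : 0 < 4 * c := (abs_nonneg b).trans_lt hb
  simp_rw [sin_add_sin_two_mul_add_sin_three_mul a b c]
  rw [forall_mem_Icc_zero_pi_sin_mul_comp_cos_nonneg_iff
      (f := fun t => 4 * c * t ^ 2 + 2 * b * t + (a - c)) (by fun_prop),
    quadratic_nonneg_on_Icc_neg_one_one_iff, abs_mul, abs_two]
  refine or_congr (and_congr ⟨fun _ => by linarith, fun _ => by linarith⟩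
    ⟨fun _ => by linarith, fun _ => by linarith⟩) ⟨fun ⟨hb, hdisc⟩ => ?_, fun ⟨hb, ha⟩ => ?_⟩
  · have hb : |b| < 4 * c := by linarith
    rw [← le_sub_iff_add_le', div_le_iff₀ (hc hb)]
    exact ⟨hb, by linarith⟩
  · rw [← le_sub_iff_add_le', div_le_iff₀ (hc hb)] at ha
    exact ⟨by linarith, by linarith⟩
end

section
/- Let a, b, c be real numbers. If the sine polynomial a·sin(x) + b·sin(2x) + c·sin(3x) is nonnegative for all x ∈ [0,π], then a ≥ |b|. -/
/-!
At `x = π / 3` and `x = 2π / 3` the term `sin 3x` vanishes while `sin 2x = ± sin x = ± √3 / 2`,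
so nonnegativity at these two points gives `a + b ≥ 0` and `a - b ≥ 0`.
-/

open Real

theorem sin_two_pi_div_three : sin (2 * π / 3) = √3 / 2 := by
  rw [show 2 * π / 3 = π - π / 3 by ring, sin_pi_sub, sin_pi_div_three]

theorem sin_two_mul_two_pi_div_three : sin (2 * (2 * π / 3)) = -(√3 / 2) := by
  rw [show 2 * (2 * π / 3) = π / 3 + π by ring, sin_add_pi, sin_pi_div_three]

theorem sin_three_mul_two_pi_div_three : sin (3 * (2 * π / 3)) = 0 := by
  rw [show 3 * (2 * π / 3) = (2 : ℕ) * π by push_cast; ring, sin_nat_mul_pi]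

theorem sine_poly_pi_div_three (a b c : ℝ) :
    a * sin (π / 3) + b * sin (2 * (π / 3)) + c * sin (3 * (π / 3)) = (a + b) * (√3 / 2) := by
  rw [show 3 * (π / 3) = π by ring, sin_pi, ← mul_div_assoc, sin_two_pi_div_three,
    sin_pi_div_three]
  ring

theorem sine_poly_two_pi_div_three (a b c : ℝ) :
    a * sin (2 * π / 3) + b * sin (2 * (2 * π / 3)) + c * sin (3 * (2 * π / 3)) =
      (a - b) * (√3 / 2) := by
  rw [sin_two_pi_div_three, sin_two_mul_two_pi_div_three, sin_three_mul_two_pi_div_three]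
  ring

theorem degree_three_sine_nonneg_necessary (a b c : ℝ)
    (h : ∀ x ∈ Set.Icc (0 : ℝ) π,
      0 ≤ a * Real.sin x + b * Real.sin (2 * x) + c * Real.sin (3 * x)) :
    |b| ≤ a := by
  have hsqrt : 0 < √3 / 2 := by positivity
  have hplus := h (π / 3) ⟨by positivity, by linarith [pi_pos]⟩
  have hminus := h (2 * π / 3) ⟨by positivity, by linarith [pi_pos]⟩
  rw [sine_poly_pi_div_three] at hplus
  rw [sine_poly_two_pi_div_three] at hminus
  have hab := nonneg_of_mul_nonneg_left hplus hsqrt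
  have hba := nonneg_of_mul_nonneg_left hminus hsqrt
  exact abs_le.mpr ⟨by linarith, by linarith⟩
end

section
/- Let a, b, c be real numbers. If the cosine polynomial a + b·cos(2x) + c·cos(3x) is nonnegative for all x ∈ [0,π], then 2a ≥ |b| + c. -/
/-! With `p x = a + b cos 2x + c cos 3x`, the points `π/6, π/3, π/2, π` give
`p = a + b/2, a - b/2 - c, a - b, a + b - c`, and both halves of `|b| + c ≤ 2a` are
nonnegative combinations of these four values:
`2a - b - c = p(π/3) + p(π/6)/3 + 2 p(π/2)/3` and `2a + b - c = p(π) + 2 p(π/6)/3 + p(π/2)/3`. -/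

open Real

noncomputable def cosPoly (a b c x : ℝ) : ℝ := a + b * cos (2 * x) + c * cos (3 * x)

section

variable (a b c : ℝ)

lemma cosPoly_pi_div_six : cosPoly a b c (π / 6) = a + b / 2 := by
  rw [cosPoly, show 2 * (π / 6) = π / 3 by ring, show 3 * (π / 6) = π / 2 by ring,
    cos_pi_div_three, cos_pi_div_two]
  ring

lemma cosPoly_pi_div_three : cosPoly a b c (π / 3) = a - b / 2 - c := by
  rw [cosPoly, show 2 * (π / 3) = π - π / 3 by ring, show 3 * (π / 3) = π by ring,
    cos_pi_sub, cos_pi_div_three, cos_pi]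
  ring

lemma cosPoly_pi_div_two : cosPoly a b c (π / 2) = a - b := by
  rw [cosPoly, show 2 * (π / 2) = π by ring, show 3 * (π / 2) = π / 2 + π by ring,
    cos_pi, cos_add_pi, cos_pi_div_two]
  ring

lemma cosPoly_pi : cosPoly a b c π = a + b - c := by
  rw [cosPoly, show 3 * π = π + 2 * π by ring, cos_two_pi, cos_add_two_pi, cos_pi]
  ring

end

theorem degree_three_cosine_nonneg_necessary (a b c : ℝ)
    (h : ∀ x ∈ Set.Icc (0 : ℝ) π,
      0 ≤ a + b * Real.cos (2 * x) + c * Real.cos (3 * x)) :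
    |b| + c ≤ 2 * a := by
  have hp : ∀ x ∈ Set.Icc 0 π, 0 ≤ cosPoly a b c x := h
  have hπ := pi_pos
  have h6 := cosPoly_pi_div_six a b c ▸ hp (π / 6) ⟨by positivity, by linarith⟩
  have h3 := cosPoly_pi_div_three a b c ▸ hp (π / 3) ⟨by positivity, by linarith⟩
  have h2 := cosPoly_pi_div_two a b c ▸ hp (π / 2) ⟨by positivity, by linarith⟩
  have h1 := cosPoly_pi a b c ▸ hp π ⟨hπ.le, le_rfl⟩
  have hb : |b| ≤ 2 * a - c := abs_le.mpr ⟨by linarith, by linarith⟩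
  linarith
end

section
/- Let λ > 1/4 and κ be real numbers. The sine polynomial κ·sin(x) + sin(2x) + λ·sin(3x) is nonnegative for all x ∈ [0,π] if and only if κ ≥ λ + 1/(4λ). -/
/-!
Since `sin 3x = sin x (4 cos² x - 1)`, the polynomial factors as `sin x · q (cos x)` with
`q t = κ + 2t + λ(4t² - 1) = 4λ (t + 1/(4λ))² + κ - λ - 1/(4λ)`.
As `sin x ≥ 0` on `[0, π]`, the bound on `κ` makes it nonnegative. Conversely, because `λ > 1/4`
the vertex `t = -1/(4λ)` lies in `(-1, 1)`, so it is `cos x` for some `x ∈ (0, π)`, where `sin x > 0`;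
there the polynomial equals `sin x · (κ - λ - 1/(4λ))`.
-/

open Real

theorem sin_poly_three_eq_sin_mul (a b c x : ℝ) :
    a * sin x + b * sin (2 * x) + c * sin (3 * x) =
      sin x * (a + 2 * b * cos x + c * (4 * cos x ^ 2 - 1)) := by
  rw [sin_two_mul, sin_three_mul]
  linear_combination (-4 * c * sin x) * sin_sq_add_cos_sq x

theorem add_two_mul_add_mul_eq_sq_add {lam : ℝ} (hlam : lam ≠ 0) (κ t : ℝ) :
    κ + 2 * t + lam * (4 * t ^ 2 - 1) =
      4 * lam * (t + 1 / (4 * lam)) ^ 2 + (κ - (lam + 1 / (4 * lam))) := by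
  field_simp
  ring

theorem sin_poly_nonneg_of_le {lam κ : ℝ} (hlam : 0 < lam) (hκ : lam + 1 / (4 * lam) ≤ κ)
    {x : ℝ} (hx : x ∈ Set.Icc 0 π) :
    0 ≤ κ * sin x + sin (2 * x) + lam * sin (3 * x) := by
  have hsin : 0 ≤ sin x := sin_nonneg_of_nonneg_of_le_pi hx.1 hx.2
  have hquad : 0 ≤ κ + 2 * cos x + lam * (4 * cos x ^ 2 - 1) := by
    rw [add_two_mul_add_mul_eq_sq_add hlam.ne']
    have := sub_nonneg.2 hκ
    positivity
  rw [← one_mul (sin (2 * x)), sin_poly_three_eq_sin_mul, mul_one]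
  exact mul_nonneg hsin hquad

theorem le_of_sin_poly_nonneg {lam κ : ℝ} (hlam : 1 / 4 < lam)
    (h : ∀ x ∈ Set.Icc (0 : ℝ) π, 0 ≤ κ * sin x + sin (2 * x) + lam * sin (3 * x)) :
    lam + 1 / (4 * lam) ≤ κ := by
  have hlam0 : 0 < lam := by linarith
  set c := -(1 / (4 * lam)) with hc
  have hc_gt : -1 < c := by
    rw [hc, neg_lt_neg_iff, div_lt_one (by linarith)]
    linarith
  have hc_lt : c < 1 := by
    have : 0 < 1 / (4 * lam) := by positivity
    linarith
  set x := arccos c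
  have hsin : 0 < sin x := sin_pos_of_pos_of_lt_pi (arccos_pos.2 hc_lt) (arccos_lt_pi.2 hc_gt)
  have hx := h x ⟨arccos_nonneg c, arccos_le_pi c⟩
  rw [← one_mul (sin (2 * x)), sin_poly_three_eq_sin_mul, mul_one,
    add_two_mul_add_mul_eq_sq_add hlam0.ne', cos_arccos hc_gt.le hc_lt.le, hc] at hx
  simpa using nonneg_of_mul_nonneg_right hx hsin

theorem curvilinear_boundary_P3 (lam κ : ℝ) (hlam : 1 / 4 < lam) :
    (∀ x ∈ Set.Icc (0 : ℝ) π,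
      0 ≤ κ * Real.sin x + Real.sin (2 * x) + lam * Real.sin (3 * x)) ↔
    lam + 1 / (4 * lam) ≤ κ :=
  ⟨le_of_sin_poly_nonneg hlam, fun hκ _ hx => sin_poly_nonneg_of_le (by linarith) hκ hx⟩
end
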